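/- For every w ∈ F_S the following are equivalent: (i) τ̄(w)(η) = η for every η ∈ Z; (ii) π(w) = 1. In other words, the pointwise stabiliser of the core Z in the free group F_S (acting via τ̄) is exactly the kernel of π : F_S → Γ. -/

import Mathlib

open scoped BigOperators symmDiff Classical

universe u v

/-- A sofic approximation of a group `Γ` generated by a finite symmetric set `S`. -/
structure SoficApprox (Γ : Type u) [Group Γ] (S : Finset Γ) where
  F : ℕ → Finset Γ
  F_mono : Monotone F
  F_one : ∀ i, (1 : Γ) ∈ F i
  F_exhausts : ∀ g : Γ, ∃ i, g ∈ F i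
  eps : ℕ → ℝ
  eps_pos : ∀ i, 0 < eps i
  eps_lim : Filter.Tendsto eps Filter.atTop (nhds 0)
  X : ℕ → Type
  finX : ∀ i, Finite (X i)
  neX : ∀ i, Nonempty (X i)
  sigma : (i : ℕ) → Γ → Equiv.Perm (X i)
  Y : (i : ℕ) → Set (X i)
  Y_large : ∀ i, (1 - eps i) * (Nat.card (X i) : ℝ) ≤ ((Y i).ncard : ℝ)
  sigma_mul : ∀ i, ∀ g ∈ F i, ∀ h ∈ F i, ∀ y ∈ Y i, sigma i g (sigma i h y) = sigma i (g * h) y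
  sigma_free : ∀ i, ∀ g ∈ F i, g ≠ 1 → ∀ y ∈ Y i, sigma i g y ≠ y

namespace SoficApprox

variable {Γ : Type u} [Group Γ] {S : Finset Γ}

/-- The total space (space of graphs) `X = ⨆ i, X i`. -/
abbrev Total (A : SoficApprox Γ S) : Type := Σ i, A.X i

/-- The bijection `σ(g)` of the total space acting as `σ_i(g)` on each `X i`. -/
def perm (A : SoficApprox Γ S) (g : Γ) : Equiv.Perm A.Total :=
  Equiv.sigmaCongrRight fun i => A.sigma i g

/-- The continuous extension `σ̄(g)` of `σ(g)` to the Stone–Čech compactification. -/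
def permBar (A : SoficApprox Γ S) (g : Γ) : Ultrafilter A.Total → Ultrafilter A.Total :=
  Ultrafilter.map (A.perm g)

/-- The union `Y = ⨆ i, Y i` inside the total space. -/
def Ytot (A : SoficApprox Γ S) : Set A.Total := {p | p.2 ∈ A.Y p.1}

/-- `∂Y`: free ultrafilters containing `Y`. -/
def bdY (A : SoficApprox Γ S) : Set (Ultrafilter A.Total) :=
  {η | (∀ p : A.Total, η ≠ pure p) ∧ A.Ytot ∈ η}

/-- The core `Z = ⋂_{g ∈ Γ} σ̄(g)''(∂Y)` of the sofic boundary. -/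
def core (A : SoficApprox Γ S) : Set (Ultrafilter A.Total) :=
  ⋂ g : Γ, A.permBar g '' A.bdY

/-- The `S`-labelled graph structure on `X i`, with edges `{x, σ_i(s)(x)}` for `s ∈ S`. -/
def graph (A : SoficApprox Γ S) (i : ℕ) : SimpleGraph (A.X i) where
  Adj x y := x ≠ y ∧ ∃ s ∈ S, A.sigma i s x = y ∨ A.sigma i s y = x
  symm := ⟨fun x y h => ⟨h.1.symm, by obtain ⟨s, hs, h'⟩ := h.2; exact ⟨s, hs, h'.symm⟩⟩⟩
  loopless := ⟨fun x h => h.1 rfl⟩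

/-- An admissible metric on the total space: a metric restricting to the edge-path
metric on each `X i` and with distances between distinct components tending to `∞`. -/
def Admissible (A : SoficApprox Γ S) (d : A.Total → A.Total → ℝ) : Prop :=
  (∀ p q, d p q = d q p) ∧
  (∀ p q r, d p r ≤ d p q + d q r) ∧
  (∀ p q, d p q = 0 ↔ p = q) ∧
  (∀ p q, 0 ≤ d p q) ∧
  (∀ (i : ℕ) (x y : A.X i), d ⟨i, x⟩ ⟨i, y⟩ = ((A.graph i).dist x y : ℝ)) ∧
  (∀ R : ℝ, ∃ N : ℕ, ∀ i j : ℕ, i ≠ j → N ≤ i + j →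
      ∀ (x : A.X i) (y : A.X j), R < d ⟨i, x⟩ ⟨j, y⟩)

/-- The entourage `E_R` viewed inside `βX × βX`. -/
def ER (A : SoficApprox Γ S) (d : A.Total → A.Total → ℝ) (R : ℝ) :
    Set (Ultrafilter A.Total × Ultrafilter A.Total) :=
  {p | ∃ a b : A.Total, d a b ≤ R ∧ p = (pure a, pure b)}

end SoficApprox

/-- Word length of `g` with respect to the generating set `S`. -/
noncomputable def wordLength {Γ : Type u} [Group Γ] (S : Finset Γ) (g : Γ) : ℕ :=
  sInf {n | ∃ l : List Γ, (∀ x ∈ l, x ∈ S) ∧ l.length = n ∧ l.prod = g}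

/-- Word length of an element of a free group. -/
noncomputable def fgLength {α : Type v} (w : FreeGroup α) : ℕ :=
  sInf {n | ∃ l : List (α × Bool), l.length = n ∧ FreeGroup.mk l = w}

/-- The canonical homomorphism `F_S → Γ` extending the inclusion `S ↪ Γ`. -/
noncomputable def pihom {Γ : Type u} [Group Γ] (S : Finset Γ) : FreeGroup ↥S →* Γ :=
  FreeGroup.lift fun s => (s : Γ)

/-- The homomorphism `τ : F_S → Sym(X)` with `τ(s) = σ(s)` for `s ∈ S`. -/
noncomputable def SoficApprox.tau {Γ : Type u} [Group Γ] {S : Finset Γ}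
    (A : SoficApprox Γ S) : FreeGroup ↥S →* Equiv.Perm A.Total :=
  FreeGroup.lift fun s => A.perm (s : Γ)

/-! Write `g = π(w)`. Every point of the core is a free ultrafilter containing `Y`, so it lives
on arbitrarily high levels `i`, where `τ(w)` agrees with `σ_i(g)` on `Y_i`; hence `τ̄(w)` and
`σ̄(g)` agree on `Z`. For `g = 1` this map fixes `Z` pointwise. For `g ≠ 1`, `σ(g)` is eventually
fixed-point free on `Y`, and by Katětov's lemma an injection without fixed points on a set of an
ultrafilter cannot fix that ultrafilter; it remains to see `Z ≠ ∅`, which holds because the sets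
`σ_i(g)(Y_i)` have density `≥ 1 - ε_i → 1`, so finitely many of them meet on high levels. -/

open Filter Function Set

namespace Ultrafilter

variable {α β : Type*}

theorem map_congr {f g : α → β} {η : Ultrafilter α} (h : f =ᶠ[η] g) : η.map f = η.map g :=
  coe_injective (Filter.map_congr h)

theorem exists_mem_apply_mem_of_map_eq_self {f : α → α} {η : Ultrafilter α} (hη : η.map f = η)
    {C : Set α} (hC : C ∈ η) : ∃ x ∈ C, f x ∈ C := by
  have hpre : f ⁻¹' C ∈ η := by rw [← hη] at hC; exact hC
  exact η.nonempty_of_mem (inter_mem hC hpre)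

/-- A maximal `M` with `f '' M ∩ M = ∅`, which exists by Zorn's lemma. -/
theorem exists_cover_of_apply_ne (f : α → α) :
    ∃ M : Set α, (∀ x ∈ M, f x ∉ M) ∧ {a | f a ≠ a} ⊆ M ∪ f '' M ∪ f ⁻¹' M := by
  obtain ⟨M, hM⟩ := zorn_subset {C : Set α | ∀ x ∈ C, f x ∉ C} fun c hc hchain => by
    refine ⟨⋃₀ c, ?_, fun C hC => subset_sUnion_of_mem hC⟩
    rintro x ⟨C₁, hC₁, hx⟩ ⟨C₂, hC₂, hfx⟩
    rcases hchain.total hC₁ hC₂ with h | h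
    · exact hc hC₂ x (h hx) hfx
    · exact hc hC₁ x hx (h hfx)
  refine ⟨M, hM.prop, fun a ha => by_contra fun hcover => ?_⟩
  simp only [mem_union, mem_image, mem_preimage, not_or, not_exists, not_and] at hcover
  obtain ⟨⟨haM, hMa⟩, hfa⟩ := hcover
  have hins : ∀ x ∈ insert a M, f x ∉ insert a M := by
    rintro x (rfl | hx) (hfx | hfx)
    exacts [ha hfx, hfa hfx, hMa x hx hfx, hM.prop x hx hfx]
  exact haM (hM.eq_of_subset hins (subset_insert a M) ▸ mem_insert a M)

/-- Katětov's lemma, for injective maps. -/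
theorem map_ne_self_of_injective {f : α → α} (hf : Injective f) {η : Ultrafilter α}
    (h : ∀ᶠ a in (η : Filter α), f a ≠ a) : η.map f ≠ η := by
  intro hη
  obtain ⟨M, hM, hcover⟩ := exists_cover_of_apply_ne f
  rcases union_mem_iff.1 (mem_of_superset h hcover) with hM' | hpre
  · rcases union_mem_iff.1 hM' with hMη | himg
    · obtain ⟨x, hx, hfx⟩ := exists_mem_apply_mem_of_map_eq_self hη hMη
      exact hM x hx hfx
    · obtain ⟨_, ⟨y, hy, rfl⟩, z, hz, hzy⟩ := exists_mem_apply_mem_of_map_eq_self hη himg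
      exact hM y hy (hf hzy ▸ hz)
  · obtain ⟨x, hx, hfx⟩ := exists_mem_apply_mem_of_map_eq_self hη hpre
    exact hM (f x) hx hfx

end Ultrafilter

theorem Finset.nonempty_biInter_of_sum_ncard_compl_lt {ι α : Type*} [Finite α] (I : Finset ι)
    (s : ι → Set α) (h : ∑ i ∈ I, (s i)ᶜ.ncard < Nat.card α) : (⋂ i ∈ I, s i).Nonempty := by
  by_contra hempty
  have hunion : ⋃ i ∈ I, (s i)ᶜ = Set.univ := by
    rw [← compl_iInter₂, Set.not_nonempty_iff_eq_empty.1 hempty, Set.compl_empty]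
  have := I.set_ncard_biUnion_le fun i => (s i)ᶜ
  rw [hunion, ncard_univ] at this
  omega

namespace SoficApprox

variable {Γ : Type u} [Group Γ] {S : Finset Γ} (A : SoficApprox Γ S)

@[simp]
theorem perm_mk (g : Γ) (i : ℕ) (x : A.X i) : A.perm g ⟨i, x⟩ = ⟨i, A.sigma i g x⟩ := rfl

@[simp]
theorem tau_of (s : S) : A.tau (FreeGroup.of s) = A.perm s := FreeGroup.lift_apply_of

@[simp]
theorem pihom_of (s : S) : pihom S (FreeGroup.of s) = s := FreeGroup.lift_apply_of

theorem sigma_one_apply {i : ℕ} {y : A.X i} (hy : y ∈ A.Y i) : A.sigma i 1 y = y :=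
  (A.sigma i 1).injective (by simpa using A.sigma_mul i 1 (A.F_one i) 1 (A.F_one i) y hy)

theorem eventually_mem_F (g : Γ) : ∀ᶠ i in atTop, g ∈ A.F i :=
  let ⟨N, hN⟩ := A.F_exhausts g
  eventually_atTop.2 ⟨N, fun _ hi => A.F_mono hi hN⟩

theorem tendsto_fst_atTop_iff {η : Ultrafilter A.Total} :
    Tendsto Sigma.fst (η : Filter A.Total) atTop ↔ ∀ p, η ≠ pure p := by
  refine ⟨fun h p hp => ?_, fun hfree => ?_⟩
  · subst hp
    exact lt_irrefl _ (h.eventually (eventually_gt_atTop p.1))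
  · rcases η.le_cofinite_or_eq_pure with hη | ⟨p, hp⟩
    · refine Tendsto.mono_left ?_ hη
      rw [← Nat.cofinite_eq_atTop]
      refine Tendsto.cofinite_of_finite_preimage_singleton fun i => ?_
      have := A.finX i
      refine (finite_range (Sigma.mk i)).subset ?_
      rintro ⟨j, x⟩ (rfl : j = i)
      exact ⟨x, rfl⟩
    · exact absurd hp (hfree p)

theorem eventually_of_mem_bdY {η : Ultrafilter A.Total} (hη : η ∈ A.bdY) {P : A.Total → Prop}
    (h : ∀ᶠ i in atTop, ∀ y ∈ A.Y i, P ⟨i, y⟩) : ∀ᶠ p in (η : Filter A.Total), P p := by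
  filter_upwards [(A.tendsto_fst_atTop_iff.2 hη.1).eventually h, hη.2] with ⟨i, y⟩ hi hy
    using hi y hy

theorem eventually_tau_apply (w : FreeGroup S) :
    ∀ᶠ i in atTop, ∀ y ∈ A.Y i, A.tau w ⟨i, y⟩ = ⟨i, A.sigma i (pihom S w) y⟩ := by
  have hw : w ∈ Subgroup.closure (range (FreeGroup.of : S → FreeGroup S)) := by simp
  induction hw using Subgroup.closure_induction_left with
  | one => exact .of_forall fun i y hy => by simp [A.sigma_one_apply hy]
  | mul_left _ hs v _ ih =>
    obtain ⟨s, rfl⟩ := hs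
    filter_upwards [ih, A.eventually_mem_F s, A.eventually_mem_F (pihom S v)] with i hi hs hv y hy
    rw [map_mul, map_mul, Equiv.Perm.mul_apply, hi y hy, tau_of, pihom_of, perm_mk,
      A.sigma_mul i s hs _ hv y hy]
  | inv_mul_cancel _ hs v _ ih =>
    obtain ⟨s, rfl⟩ := hs
    filter_upwards [ih, A.eventually_mem_F s, A.eventually_mem_F ((s : Γ)⁻¹ * pihom S v)]
      with i hi hs hv y hy
    rw [map_mul, map_mul, Equiv.Perm.mul_apply, hi y hy, map_inv, map_inv, tau_of, pihom_of,
      Equiv.Perm.inv_eq_iff_eq, perm_mk, A.sigma_mul i s hs _ hv y hy, mul_inv_cancel_left]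

theorem tau_eventuallyEq_perm {η : Ultrafilter A.Total} (hη : η ∈ A.bdY) (w : FreeGroup S) :
    ⇑(A.tau w) =ᶠ[(η : Filter A.Total)] ⇑(A.perm (pihom S w)) :=
  A.eventually_of_mem_bdY hη ((A.eventually_tau_apply w).mono fun _ h y hy => h y hy)

theorem map_perm_one_eq_self {η : Ultrafilter A.Total} (hY : A.Ytot ∈ η) :
    η.map (A.perm 1) = η := by
  rw [Ultrafilter.map_congr (g := id) (mem_of_superset hY fun ⟨_, _⟩ hy => by
    simp [A.sigma_one_apply hy]), Ultrafilter.map_id]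

theorem map_perm_ne_self {g : Γ} (hg : g ≠ 1) {η : Ultrafilter A.Total} (hη : η ∈ A.bdY) :
    η.map (A.perm g) ≠ η :=
  Ultrafilter.map_ne_self_of_injective (A.perm g).injective <| A.eventually_of_mem_bdY hη <|
    (A.eventually_mem_F g).mono fun i hgi y hy h => A.sigma_free i g hgi hg y hy (by simpa using h)

theorem core_subset_bdY : A.core ⊆ A.bdY := fun _ hη => by
  obtain ⟨ζ, hζ, rfl⟩ := mem_iInter.1 hη 1
  rwa [permBar, A.map_perm_one_eq_self hζ.2]

theorem mem_core_of_forall_image_mem {η : Ultrafilter A.Total} (hfree : ∀ p, η ≠ pure p)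
    (hT : ∀ g, A.perm g '' A.Ytot ∈ η) : η ∈ A.core := by
  have hmap : ∀ g, (η.map ⇑(A.perm g)⁻¹).map (A.perm g) = η := fun g => by
    rw [Ultrafilter.map_map, ← Equiv.Perm.coe_mul, mul_inv_cancel, Equiv.Perm.coe_one,
      Ultrafilter.map_id]
  refine mem_iInter.2 fun g => ⟨η.map ⇑(A.perm g)⁻¹, ⟨fun p hp => ?_, ?_⟩, hmap g⟩
  · exact hfree (A.perm g p) (by rw [← hmap g, hp, Ultrafilter.map_pure])
  · rw [Ultrafilter.mem_map, Equiv.Perm.coe_inv, ← Equiv.image_eq_preimage_symm]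
    exact hT g

theorem ncard_compl_image_Y_le (i : ℕ) (g : Γ) :
    ((A.sigma i g '' A.Y i)ᶜ.ncard : ℝ) ≤ A.eps i * Nat.card (A.X i) := by
  have := A.finX i
  rw [ncard_compl, ncard_image_of_injective _ (A.sigma i g).injective,
    Nat.cast_sub (ncard_le_card _)]
  linarith [A.Y_large i]

theorem eventually_nonempty_biInter_image (I : Finset Γ) :
    ∀ᶠ i in atTop, (⋂ g ∈ I, A.sigma i g '' A.Y i).Nonempty := by
  have hlim : Tendsto (fun i => I.card * A.eps i) atTop (nhds 0) := by
    simpa using A.eps_lim.const_mul (I.card : ℝ)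
  filter_upwards [hlim.eventually (gt_mem_nhds one_pos)] with i hi
  have := A.finX i
  have := A.neX i
  refine I.nonempty_biInter_of_sum_ncard_compl_lt _ (Nat.cast_lt (α := ℝ).1 ?_)
  have hn : (0 : ℝ) < Nat.card (A.X i) := Nat.cast_pos.2 Nat.card_pos
  calc ((∑ g ∈ I, (A.sigma i g '' A.Y i)ᶜ.ncard : ℕ) : ℝ)
      ≤ ∑ g ∈ I, A.eps i * Nat.card (A.X i) := by
        push_cast
        exact Finset.sum_le_sum fun g _ => A.ncard_compl_image_Y_le i g
    _ = I.card * A.eps i * Nat.card (A.X i) := by simp [mul_assoc]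
    _ < Nat.card (A.X i) := by nlinarith

theorem core_nonempty : A.core.Nonempty := by
  set T : Γ → Set A.Total := fun g => A.perm g '' A.Ytot
  let L := comap Sigma.fst atTop ⊓ ⨅ g, 𝓟 (T g)
  have : L.NeBot := by
    refine ((atTop_basis.comap _).inf_basis_neBot_iff (hasBasis_iInf_principal_finite T)).2
      fun N _ I hI => ?_
    obtain ⟨i, ⟨x, hx⟩, hNi⟩ :=
      ((A.eventually_nonempty_biInter_image hI.toFinset).and (eventually_ge_atTop N)).exists
    refine ⟨⟨i, x⟩, hNi, mem_iInter₂.2 fun g hg => ?_⟩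
    obtain ⟨y, hy, rfl⟩ := mem_iInter₂.1 hx g (hI.mem_toFinset.2 hg)
    exact ⟨⟨i, y⟩, hy, rfl⟩
  refine ⟨Ultrafilter.of L,
    A.mem_core_of_forall_image_mem (A.tendsto_fst_atTop_iff.1 ?_) fun g => ?_⟩
  · exact tendsto_iff_comap.2 ((Ultrafilter.of_le L).trans inf_le_left)
  · exact Ultrafilter.of_le L (mem_inf_of_right (mem_iInf_of_mem g (mem_principal_self _)))

end SoficApprox

open SoficApprox in
theorem stabilizer_core_eq_ker_pi_general
    {Γ : Type u} [Group Γ] {S : Finset Γ}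
    (A : SoficApprox Γ S) :
    ∀ w : FreeGroup ↥S,
      (∀ η ∈ A.core, Ultrafilter.map (A.tau w) η = η) ↔ pihom S w = 1 := by
  intro w
  refine ⟨fun hfix => by_contra fun hw => ?_, fun hw η hη => ?_⟩
  · obtain ⟨η, hη⟩ := A.core_nonempty
    have hbd := A.core_subset_bdY hη
    refine A.map_perm_ne_self hw hbd ?_
    rw [← Ultrafilter.map_congr (A.tau_eventuallyEq_perm hbd w)]
    exact hfix η hη
  · have hbd := A.core_subset_bdY hη
    rw [Ultrafilter.map_congr (A.tau_eventuallyEq_perm hbd w), hw, A.map_perm_one_eq_self hbd.2]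

open SoficApprox in
/-- **The stabiliser of the core is the kernel of `π`.**
A word `w ∈ F_S` fixes every point of the core `Z` (acting via `τ̄`) if and only if
`π(w) = 1`; i.e. the pointwise stabiliser of `Z` in `F_S` is exactly `ker(π : F_S → Γ)`. -/
theorem stabilizer_core_eq_ker_pi
    {Γ : Type u} [Group Γ] {S : Finset Γ}
    (hSsymm : ∀ s ∈ S, s⁻¹ ∈ S)
    (hSgen : Subgroup.closure (S : Set Γ) = ⊤)
    (A : SoficApprox Γ S) :
    ∀ w : FreeGroup ↥S,
      (∀ η ∈ A.core, Ultrafilter.map (A.tau w) η = η) ↔ pihom S w = 1 :=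
  stabilizer_core_eq_ker_pi_general A
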